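/- For every k ≥ 0, the curls of polynomial vector fields of degree at most k+1 on ℝ³ are exactly the divergence-free polynomial vector fields of degree at most k: {curl w : w a vector field with components in 𝒫^{k+1}(ℝ³)} = {u : u a vector field with components in 𝒫^k(ℝ³), div u = 0}. In particular, every u with components in 𝒫^k(ℝ³) satisfying div u = 0 equals curl w for some w with components in 𝒫^{k+1}(ℝ³). -/

import Mathlib

/-!
For a divergence-free field `v` whose components are homogeneous of degree `n`, Euler's identity
`∑ⱼ xⱼ ∂ⱼ vᵢ = n vᵢ` turns the identity `curl (v × x) = (x·∇) v + 2 v - x div v` into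
`curl (v × x) = (n + 2) v`. Splitting a divergence-free `u` of degree `≤ k` into homogeneous
parts `uₙ`, which are again divergence-free, gives `u = curl (∑ₙ (n + 2)⁻¹ uₙ × x)`, and
`uₙ × x` has degree `n + 1 ≤ k + 1`. Conversely `div curl = 0` because partial derivatives commute,
and differentiation lowers the total degree.
-/

open MvPolynomial

/-- The formal Laplacian `Δp = ∑ⱼ ∂ⱼ∂ⱼp` of a polynomial in `d` variables. -/
noncomputable def lap {d : ℕ} (p : MvPolynomial (Fin d) ℝ) : MvPolynomial (Fin d) ℝ :=
  ∑ j, pderiv j (pderiv j p)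

/-- The formal divergence `div v = ∑ᵢ ∂ᵢvᵢ` of a polynomial vector field. -/
noncomputable def pdiv {d : ℕ} (v : Fin d → MvPolynomial (Fin d) ℝ) : MvPolynomial (Fin d) ℝ :=
  ∑ i, pderiv i (v i)

/-- The formal curl of a polynomial vector field on `ℝ³`:
`curl v = (∂₂v₃ − ∂₃v₂, ∂₃v₁ − ∂₁v₃, ∂₁v₂ − ∂₂v₁)` (0-based indices). -/
noncomputable def curl3 (v : Fin 3 → MvPolynomial (Fin 3) ℝ) : Fin 3 → MvPolynomial (Fin 3) ℝ :=
  ![pderiv 1 (v 2) - pderiv 2 (v 1),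
    pderiv 2 (v 0) - pderiv 0 (v 2),
    pderiv 0 (v 1) - pderiv 1 (v 0)]

namespace MvPolynomial

variable {R σ : Type*}

section CommSemiring

variable [CommSemiring R]

theorem totalDegree_pderiv_le (i : σ) (p : MvPolynomial σ R) :
    (pderiv i p).totalDegree ≤ p.totalDegree - 1 := by
  classical
  refine Finset.sup_le fun m hm => ?_
  rw [mem_support_iff, coeff_pderiv] at hm
  have hdeg := le_totalDegree (mem_support_iff.mpr (left_ne_zero_of_mul hm))
  change (m + Finsupp.single i 1).degree ≤ _ at hdeg
  rw [map_add, Finsupp.degree_single] at hdeg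
  change m.degree ≤ _
  omega

theorem homogeneousComponent_pderiv (n : ℕ) (i : σ) (p : MvPolynomial σ R) :
    homogeneousComponent n (pderiv i p) = pderiv i (homogeneousComponent (n + 1) p) := by
  classical
  ext m
  simp only [coeff_homogeneousComponent, coeff_pderiv, map_add, Finsupp.degree_single,
    Nat.add_right_cancel_iff]
  split_ifs <;> simp

theorem sum_range_homogeneousComponent {k : ℕ} {p : MvPolynomial σ R} (h : p.totalDegree ≤ k) :
    ∑ n ∈ Finset.range (k + 1), homogeneousComponent n p = p := by
  conv_rhs => rw [← sum_homogeneousComponent p]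
  refine (Finset.sum_subset (Finset.range_subset_range.mpr (by omega)) fun n _ hn => ?_).symm
  exact homogeneousComponent_eq_zero n p (by simpa using hn)

end CommSemiring

theorem pderiv_pderiv_comm [CommRing R] (i j : σ) (p : MvPolynomial σ R) :
    pderiv i (pderiv j p) = pderiv j (pderiv i p) := by
  classical
  have : ⁅pderiv i, pderiv j⁆ = (0 : Derivation R (MvPolynomial σ R) (MvPolynomial σ R)) :=
    derivation_ext fun k => by
      rw [Derivation.commutator_apply, pderiv_X, pderiv_X]
      simp [Pi.single_apply, apply_ite]
  simpa [Derivation.commutator_apply, sub_eq_zero] using congr($this p)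

end MvPolynomial

open scoped Matrix

theorem pdiv_curl3 (w : Fin 3 → MvPolynomial (Fin 3) ℝ) : pdiv (curl3 w) = 0 := by
  simp only [pdiv, curl3, Fin.sum_univ_three, Matrix.cons_val, map_sub]
  rw [pderiv_pderiv_comm 0 1, pderiv_pderiv_comm 0 2, pderiv_pderiv_comm 1 2]
  ring

theorem totalDegree_curl3_le {n : ℕ} {w : Fin 3 → MvPolynomial (Fin 3) ℝ}
    (hw : ∀ i, (w i).totalDegree ≤ n + 1) (i : Fin 3) : (curl3 w i).totalDegree ≤ n := by
  have h : ∀ j l, (pderiv j (w l)).totalDegree ≤ n := fun j l =>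
    (totalDegree_pderiv_le j (w l)).trans (Nat.sub_le_of_le_add (hw l))
  fin_cases i <;> exact (totalDegree_sub _ _).trans (max_le (h _ _) (h _ _))

theorem curl3_cross_X (v : Fin 3 → MvPolynomial (Fin 3) ℝ) (i : Fin 3) :
    curl3 (v ⨯₃ X) i = ∑ j, X j * pderiv j (v i) + 2 * v i - X i * pdiv v := by
  fin_cases i <;>
  simp only [curl3, cross_apply, pdiv, Fin.sum_univ_three, Matrix.cons_val, map_sub, pderiv_mul,
    pderiv_X, Pi.single_apply, Fin.isValue, Fin.zero_eta, Fin.mk_one, Fin.reduceFinMk, Fin.reduceEq,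
    if_true, if_false] <;> ring

theorem curl3_cross_X_of_isHomogeneous {n : ℕ} {v : Fin 3 → MvPolynomial (Fin 3) ℝ}
    (hv : ∀ i, (v i).IsHomogeneous n) (hdiv : pdiv v = 0) :
    curl3 (v ⨯₃ X) = ((n : ℝ) + 2) • v := by
  funext i
  rw [curl3_cross_X, (hv i).sum_X_mul_pderiv, hdiv, mul_zero, sub_zero, nsmul_eq_mul, ← add_mul,
    Pi.smul_apply, smul_eq_C_mul, map_add, map_natCast, map_ofNat]

theorem isHomogeneous_cross_X {n : ℕ} {v : Fin 3 → MvPolynomial (Fin 3) ℝ}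
    (hv : ∀ i, (v i).IsHomogeneous n) (i : Fin 3) : ((v ⨯₃ X) i).IsHomogeneous (n + 1) := by
  have h : ∀ j l, (v j * X l).IsHomogeneous (n + 1) := fun j l => (hv j).mul (isHomogeneous_X ℝ l)
  fin_cases i <;> exact (h _ _).sub (h _ _)

theorem pdiv_homogeneousComponent {d : ℕ} {u : Fin d → MvPolynomial (Fin d) ℝ} (hdiv : pdiv u = 0)
    (n : ℕ) : pdiv (homogeneousComponent n ∘ u) = 0 := by
  cases n with
  | zero => simp [pdiv]
  | succ n =>
    simp only [pdiv, Function.comp_apply, ← homogeneousComponent_pderiv, ← map_sum]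
    exact (congrArg _ hdiv).trans (map_zero _)

noncomputable def curl3LinearMap :
    (Fin 3 → MvPolynomial (Fin 3) ℝ) →ₗ[ℝ] Fin 3 → MvPolynomial (Fin 3) ℝ where
  toFun := curl3
  map_add' v w := by funext i; fin_cases i <;> simp [curl3, add_sub_add_comm]
  map_smul' c v := by funext i; fin_cases i <;> simp [curl3, smul_sub]

theorem curl3LinearMap_apply (v : Fin 3 → MvPolynomial (Fin 3) ℝ) : curl3LinearMap v = curl3 v :=
  rfl

/-- For every `k ≥ 0`, the curls of polynomial vector fields of degree at most `k + 1` on `ℝ³`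
are exactly the divergence-free polynomial vector fields of degree at most `k`. -/
theorem curl_range_eq_divfree (k : ℕ) :
    {u : Fin 3 → MvPolynomial (Fin 3) ℝ |
        ∃ w : Fin 3 → MvPolynomial (Fin 3) ℝ,
          (∀ i, (w i).totalDegree ≤ k + 1) ∧ u = curl3 w} =
      {u : Fin 3 → MvPolynomial (Fin 3) ℝ |
        (∀ i, (u i).totalDegree ≤ k) ∧ pdiv u = 0} := by
  ext u
  constructor
  · rintro ⟨w, hw, rfl⟩
    exact ⟨totalDegree_curl3_le hw, pdiv_curl3 w⟩
  · rintro ⟨hu, hdiv⟩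
    have hhom (n : ℕ) (i : Fin 3) : ((homogeneousComponent n ∘ u) i).IsHomogeneous n :=
      homogeneousComponent_isHomogeneous n (u i)
    refine ⟨∑ n ∈ Finset.range (k + 1), ((n : ℝ) + 2)⁻¹ • ((homogeneousComponent n ∘ u) ⨯₃ X),
      fun i => ?_, ?_⟩
    · rw [Finset.sum_apply, ← mem_restrictTotalDegree]
      refine Submodule.sum_mem _ fun n hn => Submodule.smul_mem _ _ ?_
      rw [mem_restrictTotalDegree]
      exact (isHomogeneous_cross_X (hhom n) i).totalDegree_le.trans
        (by simpa [Finset.mem_range] using hn)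
    · calc u = ∑ n ∈ Finset.range (k + 1), homogeneousComponent n ∘ u :=
            funext fun i => by simp [Finset.sum_apply, sum_range_homogeneousComponent (hu i)]
        _ = ∑ n ∈ Finset.range (k + 1),
              ((n : ℝ) + 2)⁻¹ • curl3 ((homogeneousComponent n ∘ u) ⨯₃ X) := by
            refine Finset.sum_congr rfl fun n _ => ?_
            rw [curl3_cross_X_of_isHomogeneous (hhom n) (pdiv_homogeneousComponent hdiv n),
              smul_smul, inv_mul_cancel₀ (by positivity), one_smul]
        _ = _ := by simp only [← curl3LinearMap_apply, map_sum, map_smul]
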